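/- Let C ∈ (ℝ ∪ {−∞})^{n×n}. The inequality C x ≤ x has a regular solution x ∈ ℝⁿ if and only if Tr(C) ≤ 𝟙, and in that case the regular solutions are exactly the vectors of the form x = C* u with u ∈ ℝⁿ a regular vector. -/

import Mathlib

/-!
A regular solution of `C x ≤ x` gives `Cᵐ x ≤ x` for every `m`, hence `(Cᵐ)ᵢᵢ ≤ 𝟙`, i.e.
`Tr(C) ≤ 𝟙`. Conversely, `(Cᵐ)ᵢⱼ` is the largest weight of a walk of length `m` from `i` to `j`.
When every cycle of length at most `n` has nonpositive weight, a walk of length `≥ n` revisits a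
vertex among its first `n + 1`, and cutting out that cycle does not lower its weight; so all powers
of `C` are bounded by `C*`. Then `C C* ≤ C*`, which makes every `C* u` a solution, and a
solution `x` satisfies `x ≤ C* x = ⊕ₘ Cᵐ x ≤ x`.
-/

open Finset

noncomputable section

namespace MaxPlus

/-- Max-plus multiplicative inverse: `-a` for real `a`, `⊥` for `⊥`. -/
def tinv (a : WithBot ℝ) : WithBot ℝ := WithBot.map (fun r => -r) a

/-- Max-plus rational power `a^(1/k) = a / k`. -/
def trt (a : WithBot ℝ) (k : ℕ) : WithBot ℝ := WithBot.map (fun r => r / (k : ℝ)) a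

/-- A vector is regular if it has no `⊥` (= -∞) entries. -/
def Reg {n : ℕ} (x : Fin n → WithBot ℝ) : Prop := ∀ i, x i ≠ ⊥

/-- `cdot q x = q⁻ x`, the max-plus product of the conjugate row vector `q⁻` with `x`. -/
def cdot {n : ℕ} (q x : Fin n → WithBot ℝ) : WithBot ℝ :=
  Finset.univ.sup fun i => tinv (q i) + x i

/-- Max-plus matrix-vector product. -/
def mulVec {m n : ℕ} (A : Matrix (Fin m) (Fin n) (WithBot ℝ)) (x : Fin n → WithBot ℝ) :
    Fin m → WithBot ℝ := fun i => Finset.univ.sup fun j => A i j + x j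

/-- Max-plus matrix product. -/
def tmul {l m n : ℕ} (A : Matrix (Fin l) (Fin m) (WithBot ℝ))
    (B : Matrix (Fin m) (Fin n) (WithBot ℝ)) : Matrix (Fin l) (Fin n) (WithBot ℝ) :=
  fun i j => Finset.univ.sup fun k => A i k + B k j

/-- Multiplicative conjugate transpose of a matrix. -/
def conjM {m n : ℕ} (A : Matrix (Fin m) (Fin n) (WithBot ℝ)) :
    Matrix (Fin n) (Fin m) (WithBot ℝ) := fun i j => tinv (A j i)

/-- Max-plus identity matrix. -/
def tId {n : ℕ} : Matrix (Fin n) (Fin n) (WithBot ℝ) := fun i j => if i = j then 0 else ⊥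

/-- Max-plus matrix power. -/
def tpow {n : ℕ} (A : Matrix (Fin n) (Fin n) (WithBot ℝ)) : ℕ → Matrix (Fin n) (Fin n) (WithBot ℝ)
  | 0 => tId
  | k + 1 => tmul A (tpow A k)

/-- Max-plus trace. -/
def ttr {n : ℕ} (A : Matrix (Fin n) (Fin n) (WithBot ℝ)) : WithBot ℝ :=
  Finset.univ.sup fun i => A i i

/-- `Tr(A) = tr A ⊕ tr A² ⊕ ⋯ ⊕ tr Aⁿ`. -/
def TrOp {n : ℕ} (A : Matrix (Fin n) (Fin n) (WithBot ℝ)) : WithBot ℝ :=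
  (Finset.Icc 1 n).sup fun m => ttr (tpow A m)

/-- Kleene star `A* = I ⊕ A ⊕ ⋯ ⊕ A^(n-1)`. -/
def kstar {n : ℕ} (A : Matrix (Fin n) (Fin n) (WithBot ℝ)) : Matrix (Fin n) (Fin n) (WithBot ℝ) :=
  fun i j => (Finset.range n).sup fun k => tpow A k i j

/-- Max-plus spectral radius `λ = ⊕_{m=1}^n (tr A^m)^(1/m)`. -/
def specRad {n : ℕ} (A : Matrix (Fin n) (Fin n) (WithBot ℝ)) : WithBot ℝ :=
  (Finset.Icc 1 n).sup fun m => trt (ttr (tpow A m)) m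

/-- `prodAB A B [i₁, …, i_k] = A B^{i₁} A B^{i₂} ⋯ A B^{i_k}`. -/
def prodAB {n : ℕ} (A B : Matrix (Fin n) (Fin n) (WithBot ℝ)) :
    List ℕ → Matrix (Fin n) (Fin n) (WithBot ℝ)
  | [] => tId
  | i :: t => tmul (tmul A (tpow B i)) (prodAB A B t)

/-- The all-ones (all-`𝟙 = 0`) vector. -/
def onesV (n : ℕ) : Fin n → WithBot ℝ := fun _ => 0

end MaxPlus

open MaxPlus

namespace MaxPlus

lemma add_finsetSup {ι : Type*} (s : Finset ι) (f : ι → WithBot ℝ) (a : WithBot ℝ) :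
    a + s.sup f = s.sup fun i => a + f i :=
  Finset.apply_sup_eq_sup_comp_of_linearOrder (a + ·) (fun _ _ h => add_le_add_right h a)
    (WithBot.add_bot a)

lemma finsetSup_add {ι : Type*} (s : Finset ι) (f : ι → WithBot ℝ) (a : WithBot ℝ) :
    s.sup f + a = s.sup fun i => f i + a := by
  simpa only [add_comm] using add_finsetSup s f a

variable {n : ℕ}

lemma tpow_succ (C : Matrix (Fin n) (Fin n) (WithBot ℝ)) (m : ℕ) :
    tpow C (m + 1) = tmul C (tpow C m) := rfl

lemma mulVec_tmul (A B : Matrix (Fin n) (Fin n) (WithBot ℝ)) (x : Fin n → WithBot ℝ) :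
    mulVec (tmul A B) x = mulVec A (mulVec B x) := by
  funext i
  simp only [mulVec, tmul, finsetSup_add, add_finsetSup, add_assoc]
  exact Finset.sup_comm _ _ _

lemma mulVec_tId (x : Fin n → WithBot ℝ) : mulVec tId x = x := by
  funext i
  refine le_antisymm (Finset.sup_le fun j _ => ?_) ?_
  · by_cases hij : i = j <;> simp [tId, hij]
  · exact le_of_eq_of_le (by simp [tId]) (Finset.le_sup (f := fun j => tId i j + x j) (mem_univ i))

lemma mulVec_mono {A B : Matrix (Fin n) (Fin n) (WithBot ℝ)} {x y : Fin n → WithBot ℝ}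
    (hAB : ∀ i j, A i j ≤ B i j) (hxy : x ≤ y) : mulVec A x ≤ mulVec B y :=
  fun i => Finset.sup_mono_fun fun j _ => add_le_add (hAB i j) (hxy j)

lemma mulVec_tpow_le {C : Matrix (Fin n) (Fin n) (WithBot ℝ)} {x : Fin n → WithBot ℝ}
    (hx : mulVec C x ≤ x) : ∀ m, mulVec (tpow C m) x ≤ x
  | 0 => (mulVec_tId x).le
  | m + 1 => by
    rw [tpow_succ, mulVec_tmul]
    exact (mulVec_mono (fun _ _ => le_rfl) (mulVec_tpow_le hx m)).trans hx

lemma trOp_nonpos_of_mulVec_le {C : Matrix (Fin n) (Fin n) (WithBot ℝ)} {x : Fin n → WithBot ℝ}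
    (hreg : Reg x) (hx : mulVec C x ≤ x) : TrOp C ≤ 0 := by
  refine Finset.sup_le fun m _ => Finset.sup_le fun i _ => ?_
  have hdiag : tpow C m i i + x i ≤ 0 + x i := by
    rw [zero_add]
    exact (Finset.le_sup (f := fun j => tpow C m i j + x j) (mem_univ i)).trans
      (mulVec_tpow_le hx m i)
  exact (WithBot.add_le_add_iff_right (hreg i)).mp hdiag

section Walks

variable (C : Matrix (Fin n) (Fin n) (WithBot ℝ))

def walkWeight (w : ℕ → Fin n) (m : ℕ) : WithBot ℝ :=
  ∑ t ∈ range m, C (w t) (w (t + 1))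

lemma walkWeight_succ (w : ℕ → Fin n) (m : ℕ) :
    walkWeight C w (m + 1) = C (w 0) (w 1) + walkWeight C (fun t => w (t + 1)) m := by
  rw [walkWeight, Finset.sum_range_succ', add_comm]
  rfl

lemma walkWeight_add (w : ℕ → Fin n) (a b : ℕ) :
    walkWeight C w (a + b) = walkWeight C w a + walkWeight C (fun t => w (a + t)) b := by
  simp only [walkWeight, Finset.sum_range_add, add_assoc]

lemma walkWeight_le_tpow : ∀ (m : ℕ) (w : ℕ → Fin n), walkWeight C w m ≤ tpow C m (w 0) (w m)
  | 0, w => by simp [walkWeight, tpow, tId]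
  | m + 1, w => by
    rw [walkWeight_succ, tpow_succ]
    exact (add_le_add_right (walkWeight_le_tpow m fun t => w (t + 1)) _).trans
      (Finset.le_sup (f := fun k => C (w 0) k + tpow C m k (w (m + 1))) (mem_univ (w 1)))

lemma exists_walkWeight_eq_tpow :
    ∀ (m : ℕ) (i j : Fin n), tpow C m i j ≠ ⊥ →
      ∃ w : ℕ → Fin n, w 0 = i ∧ w m = j ∧ walkWeight C w m = tpow C m i j
  | 0, i, j, h => by
    have hij : i = j := by
      by_contra hij
      exact h (if_neg hij)
    exact ⟨fun _ => i, rfl, hij, by simp [walkWeight, tpow, tId, hij]⟩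
  | m + 1, i, j, h => by
    obtain ⟨k, -, hk⟩ := Finset.exists_mem_eq_sup univ ⟨i, mem_univ i⟩
      fun k => C i k + tpow C m k j
    rw [tpow_succ, tmul, hk] at h ⊢
    obtain ⟨w, hw0, hwm, hw⟩ := exists_walkWeight_eq_tpow m k j (WithBot.add_ne_bot.mp h).2
    refine ⟨fun t => Nat.casesOn t i w, rfl, hwm, ?_⟩
    rw [walkWeight_succ]
    exact congrArg₂ (· + ·) (congrArg (C i) hw0) hw

/-- The walk `w` with the closed piece between times `p` and `p + d` cut out. -/
def skip (w : ℕ → Fin n) (p d : ℕ) : ℕ → Fin n := fun t => if t ≤ p then w t else w (t + d)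

lemma skip_shift {w : ℕ → Fin n} {p d : ℕ} (hw : w p = w (p + d)) :
    (fun t => skip w p d (p + t)) = fun t => w (p + d + t) := by
  funext t
  rcases Nat.eq_zero_or_pos t with rfl | ht
  · simpa [skip] using hw
  · simp only [skip, if_neg (by omega : ¬p + t ≤ p)]
    congr 1
    omega

lemma tpow_diag_le_trOp {m : ℕ} (hm : 0 < m) (hmn : m ≤ n) (i : Fin n) :
    tpow C m i i ≤ TrOp C :=
  (Finset.le_sup (f := fun i => tpow C m i i) (mem_univ i)).trans
    (Finset.le_sup (f := fun m => ttr (tpow C m)) (mem_Icc.mpr ⟨hm, hmn⟩))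

lemma walkWeight_le_walkWeight_skip (hC : TrOp C ≤ 0) {w : ℕ → Fin n} {p d : ℕ} (r : ℕ)
    (hd : 0 < d) (hdn : d ≤ n) (hw : w p = w (p + d)) :
    walkWeight C w (p + d + r) ≤ walkWeight C (skip w p d) (p + r) := by
  have hcycle : walkWeight C (fun t => w (p + t)) d ≤ 0 := by
    refine (walkWeight_le_tpow C d _).trans ?_
    simp only [add_zero, ← hw]
    exact (tpow_diag_le_trOp C hd hdn _).trans hC
  have hprefix : walkWeight C (skip w p d) p = walkWeight C w p :=
    Finset.sum_congr rfl fun t ht => by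
      have := mem_range.mp ht
      simp only [skip, if_pos this.le, if_pos (Nat.succ_le_of_lt this)]
  calc walkWeight C w (p + d + r)
      = walkWeight C w p + walkWeight C (fun t => w (p + t)) d +
          walkWeight C (fun t => w (p + d + t)) r := by
        rw [walkWeight_add C w (p + d), walkWeight_add C w p]
    _ ≤ walkWeight C w p + 0 + walkWeight C (fun t => w (p + d + t)) r := by gcongr
    _ = walkWeight C (skip w p d) (p + r) := by
        rw [add_zero, walkWeight_add C (skip w p d), hprefix, skip_shift hw]

lemma exists_lt_le_apply_eq (w : ℕ → Fin n) : ∃ p q, p < q ∧ q ≤ n ∧ w p = w q := by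
  obtain ⟨x, y, hxy, hw⟩ :=
    Fintype.exists_ne_map_eq_of_card_lt (fun k : Fin (n + 1) => w k) (by simp)
  rcases lt_or_gt_of_ne (Fin.val_ne_of_ne hxy) with h | h
  · exact ⟨x, y, h, Nat.lt_succ_iff.mp y.isLt, hw⟩
  · exact ⟨y, x, h, Nat.lt_succ_iff.mp x.isLt, hw.symm⟩

lemma tpow_le_kstar_of_lt {m : ℕ} (hm : m < n) (i j : Fin n) : tpow C m i j ≤ kstar C i j :=
  Finset.le_sup (f := fun k => tpow C k i j) (mem_range.mpr hm)

lemma walkWeight_le_kstar (hC : TrOp C ≤ 0) (m : ℕ) (w : ℕ → Fin n) :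
    walkWeight C w m ≤ kstar C (w 0) (w m) := by
  induction m using Nat.strong_induction_on generalizing w with
  | _ m ih =>
  rcases lt_or_ge m n with hmn | hnm
  · exact (walkWeight_le_tpow C m w).trans (tpow_le_kstar_of_lt C hmn _ _)
  obtain ⟨p, q, hpq, hqn, hw⟩ := exists_lt_le_apply_eq w
  obtain ⟨d, rfl⟩ := Nat.exists_eq_add_of_lt hpq
  rw [add_assoc] at hqn hw
  obtain ⟨r, rfl⟩ := Nat.exists_eq_add_of_le (hqn.trans hnm)
  have hstart : skip w p (d + 1) 0 = w 0 := if_pos p.zero_le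
  have hend : skip w p (d + 1) (p + r) = w (p + (d + 1) + r) := congrFun (skip_shift hw) r
  refine (walkWeight_le_walkWeight_skip C hC r d.succ_pos (by omega) hw).trans ?_
  exact (ih (p + r) (by omega) _).trans (le_of_eq (by rw [hstart, hend]))

end Walks

variable {C : Matrix (Fin n) (Fin n) (WithBot ℝ)}

lemma tpow_le_kstar (hC : TrOp C ≤ 0) (m : ℕ) (i j : Fin n) : tpow C m i j ≤ kstar C i j := by
  by_cases h : tpow C m i j = ⊥
  · exact h ▸ bot_le
  obtain ⟨w, rfl, rfl, hw⟩ := exists_walkWeight_eq_tpow C m i j h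
  exact hw ▸ walkWeight_le_kstar C hC m w

lemma tmul_kstar_le (hC : TrOp C ≤ 0) (i j : Fin n) : tmul C (kstar C) i j ≤ kstar C i j := by
  refine Finset.sup_le fun k _ => ?_
  rw [kstar, add_finsetSup]
  refine Finset.sup_le fun m _ => ?_
  exact (Finset.le_sup (f := fun k => C i k + tpow C m k j) (mem_univ k)).trans
    (tpow_le_kstar hC (m + 1) i j)

lemma mulVec_mulVec_kstar_le (hC : TrOp C ≤ 0) (u : Fin n → WithBot ℝ) :
    mulVec C (mulVec (kstar C) u) ≤ mulVec (kstar C) u := by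
  rw [← mulVec_tmul]
  exact mulVec_mono (tmul_kstar_le hC) le_rfl

lemma mulVec_kstar_apply (x : Fin n → WithBot ℝ) (i : Fin n) :
    mulVec (kstar C) x i = (range n).sup fun m => mulVec (tpow C m) x i := by
  simp only [mulVec, kstar, finsetSup_add]
  exact Finset.sup_comm _ _ _

lemma le_mulVec_kstar (x : Fin n → WithBot ℝ) : x ≤ mulVec (kstar C) x := fun i => by
  rw [mulVec_kstar_apply]
  exact le_of_eq_of_le (congrFun (mulVec_tId x) i).symm
    (Finset.le_sup (f := fun m => mulVec (tpow C m) x i) (mem_range.mpr i.pos))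

lemma Reg.mulVec_kstar {u : Fin n → WithBot ℝ} (hu : Reg u) : Reg (mulVec (kstar C) u) :=
  fun i h => hu i (le_bot_iff.mp (h ▸ le_mulVec_kstar u i))

lemma mulVec_kstar_eq_self {x : Fin n → WithBot ℝ} (hx : mulVec C x ≤ x) :
    mulVec (kstar C) x = x := by
  refine le_antisymm (fun i => ?_) (le_mulVec_kstar x)
  rw [mulVec_kstar_apply]
  exact Finset.sup_le fun m _ => mulVec_tpow_le hx m i

end MaxPlus

open MaxPlus

/-- the inequality `C x ≤ x` has a regular solution iff `Tr(C) ≤ 𝟙`,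
and then the regular solutions are exactly the vectors `x = C* u` with `u` regular. -/
theorem stmt_16 {n : ℕ} (C : Matrix (Fin n) (Fin n) (WithBot ℝ)) :
    ((∃ x : Fin n → WithBot ℝ, Reg x ∧ ∀ i, mulVec C x i ≤ x i) ↔ TrOp C ≤ 0) ∧
      (TrOp C ≤ 0 →
        ∀ x : Fin n → WithBot ℝ,
          ((Reg x ∧ ∀ i, mulVec C x i ≤ x i) ↔
            ∃ u : Fin n → WithBot ℝ, Reg u ∧ x = mulVec (kstar C) u)) := by
  have kstar_sol (hC : TrOp C ≤ 0) (u : Fin n → WithBot ℝ) (hu : Reg u) :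
      Reg (mulVec (kstar C) u) ∧ ∀ i, mulVec C (mulVec (kstar C) u) i ≤ mulVec (kstar C) u i :=
    ⟨hu.mulVec_kstar, mulVec_mulVec_kstar_le hC u⟩
  refine ⟨⟨fun ⟨x, hreg, hx⟩ => trOp_nonpos_of_mulVec_le hreg hx,
    fun hC => ⟨_, kstar_sol hC (onesV n) fun _ => WithBot.zero_ne_bot⟩⟩, fun hC x => ⟨?_, ?_⟩⟩
  · rintro ⟨hreg, hx⟩
    exact ⟨x, hreg, (mulVec_kstar_eq_self hx).symm⟩
  · rintro ⟨u, hu, rfl⟩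
    exact kstar_sol hC u hu
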